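/- arXiv:1409.0338 — 2 statements merged into one kernel-verified Lean document; each statement's English description precedes it below -/
import Mathlib

section
/- With the notation of generalized majorization (partitions a of length n, b of length m, c of length m+n), if c ≺ (b,a) holds, then c_{h_n+i} = b_{h_n−n+i} for all i = 1,...,m+n−h_n, where h_n = min{ i : b_{i−n+1} < c_i }. -/
/-- `a` is a partition with (at most) `n` parts `a 1 ≥ a 2 ≥ ... ≥ a n ≥ 0`
(values of `a` outside `{1, ..., n}` are irrelevant). -/
def IsPartOn (a : ℕ → ℤ) (n : ℕ) : Prop :=
  (∀ i, 1 ≤ i → i ≤ n → 0 ≤ a i) ∧ ∀ i, 1 ≤ i → i + 1 ≤ n → a (i + 1) ≤ a i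

/-- The extension of a partition `b = (b 1, ..., b m)` by `+∞` for indices `≤ 0`
and by `-∞` for indices `> m`. -/
noncomputable def extSeq (b : ℕ → ℤ) (m : ℕ) : ℤ → EReal := fun i =>
  if i ≤ 0 then ⊤ else if i ≤ (m : ℤ) then (((b i.toNat : ℤ) : ℝ) : EReal) else ⊥

/-- `hIdx b c m n q` is `h_q = min { i | b (i - q + 1) < c i }`, with the conventions
`b i = +∞` for `i ≤ 0`, `b i = -∞` for `i > m`, `c i = -∞` for `i > m + n`. -/
noncomputable def hIdx (b c : ℕ → ℤ) (m n q : ℕ) : ℕ :=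
  sInf { i : ℕ | extSeq b m ((i : ℤ) - q + 1) < extSeq c (m + n) i }

/-- `csum a t = a 1 + a 2 + ... + a t`. -/
def csum (a : ℕ → ℤ) (t : ℕ) : ℤ := ∑ i ∈ Finset.Icc 1 t, a i

/-- `Ssum b c m n q = Σ_{i=1}^{h_q} c i - Σ_{i=1}^{h_q - q} b i` (and `0` for `q = 0`),
so that `x 1 + ... + x q = Ssum b c m n q`. -/
noncomputable def Ssum (b c : ℕ → ℤ) (m n q : ℕ) : ℤ :=
  if q = 0 then 0 else csum c (hIdx b c m n q) - csum b (hIdx b c m n q - q)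

/-- The sequence `x` defined by `x 1 = Σ_{i=1}^{h_1} c i - Σ_{i=1}^{h_1 - 1} b i` and
`x q = Σ_{i=1}^{h_q} c i - Σ_{i=1}^{h_q - q} b i - x 1 - ... - x (q-1)`. -/
noncomputable def xSeq (b c : ℕ → ℤ) (m n q : ℕ) : ℤ :=
  Ssum b c m n q - Ssum b c m n (q - 1)

/-- Dominance ordering `x ≼ a` for sequences of length `n` (equal sums and all
partial-sum inequalities). -/
def DomOn (x a : ℕ → ℤ) (n : ℕ) : Prop :=
  (∀ j, 1 ≤ j → j ≤ n → csum x j ≤ csum a j) ∧ csum x n = csum a n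

/-- Generalized majorization `c ≺ (b, a)`, where `a` has `n` parts, `b` has `m` parts
and `c` has `m + n` parts. -/
noncomputable def GenMaj (c b a : ℕ → ℤ) (m n : ℕ) : Prop :=
  (∀ i, 1 ≤ i → i ≤ m → c (i + n) ≤ b i) ∧
  csum b m + csum a n = csum c (m + n) ∧
  ∀ q, 1 ≤ q → q ≤ n →
    csum c (hIdx b c m n q) - csum b (hIdx b c m n q - q) ≤ csum a q

/-- Elementary generalized majorization `d ≺₁ (e, a1)`, where `e` has `m` parts and
`d` has `m + 1` parts. -/
noncomputable def ElemGenMaj (d e : ℕ → ℤ) (a1 : ℤ) (m : ℕ) : Prop :=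
  (∀ i, 1 ≤ i → i ≤ m → d (i + 1) ≤ e i) ∧
  csum e m + a1 = csum d (m + 1) ∧
  ∀ i, hIdx e d m 1 1 ≤ i → i ≤ m → e i = d (i + 1)

/-! The interlacing `c (i + n) ≤ b i` makes every term of `∑_{i > h_n} (b (i - n) - c i)`
nonnegative, while the total-sum condition together with the partial-sum inequality for
`q = n` makes this sum nonpositive, so every term vanishes. The index shift `i - n` is
legitimate because `n ≤ h_n`: below `n` the index `i - n + 1` is `≤ 0`, where `b = +∞`. -/

lemma csum_add_eq (a : ℕ → ℤ) (k t : ℕ) :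
    csum a (k + t) = csum a k + ∑ i ∈ Finset.Icc 1 t, a (k + i) := by
  induction t with
  | zero => simp [csum]
  | succ t ih =>
    simp only [csum] at ih ⊢
    rw [← Nat.add_assoc, Finset.sum_Icc_succ_top (by omega), ih,
      Finset.sum_Icc_succ_top (by omega), Nat.add_assoc]
    ring

section Interlacing

variable {b c : ℕ → ℤ} {m n p : ℕ}

lemma csum_add_sub_csum_le_of_interlacing (hbc : ∀ i, 1 ≤ i → i ≤ m → c (i + n) ≤ b i)
    (hp : p ≤ m) : csum c (n + p) - csum b p ≤ csum c n := by
  have hle : ∑ i ∈ Finset.Icc 1 p, c (n + i) ≤ csum b p := by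
    refine Finset.sum_le_sum fun i hi => ?_
    rw [Finset.mem_Icc] at hi
    rw [Nat.add_comm]
    exact hbc i hi.1 (by omega)
  linarith [csum_add_eq c n p]

lemma tail_eq_of_interlacing (hbc : ∀ i, 1 ≤ i → i ≤ m → c (i + n) ≤ b i) (hp : p ≤ m)
    (hsum : csum b m - csum b p ≤ csum c (m + n) - csum c (p + n)) {i : ℕ}
    (hi1 : 1 ≤ i) (hi2 : i ≤ m - p) : c (p + n + i) = b (p + i) := by
  have hterm : ∀ j ∈ Finset.Icc 1 (m - p), 0 ≤ b (p + j) - c (p + n + j) := fun j hj => by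
    rw [Finset.mem_Icc] at hj
    have := hbc (p + j) (by omega) (by omega)
    rw [show p + j + n = p + n + j by omega] at this
    omega
  have hzero : ∑ j ∈ Finset.Icc 1 (m - p), (b (p + j) - c (p + n + j)) = 0 := by
    refine le_antisymm ?_ (Finset.sum_nonneg hterm)
    have hb := csum_add_eq b p (m - p)
    have hc := csum_add_eq c (p + n) (m - p)
    rw [Nat.add_sub_cancel' hp] at hb
    rw [show p + n + (m - p) = m + n by omega] at hc
    rw [Finset.sum_sub_distrib]
    linarith
  have := (Finset.sum_eq_zero_iff_of_nonneg hterm).mp hzero i (Finset.mem_Icc.mpr ⟨hi1, hi2⟩)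
  omega

end Interlacing

section HIdx

variable {b c : ℕ → ℤ} {m n q : ℕ}

lemma extSeq_hIdx_lt (hmn : 0 < m + n) (hq : q ≤ n) :
    extSeq b m ((hIdx b c m n q : ℤ) - q + 1) < extSeq c (m + n) (hIdx b c m n q) := by
  refine Nat.sInf_mem (s := {i : ℕ | extSeq b m ((i : ℤ) - q + 1) < extSeq c (m + n) i})
    ⟨m + n, ?_⟩
  simp only [Set.mem_ofPred_eq, extSeq]
  rw [if_neg (by omega), if_neg (by omega), if_neg (by omega), if_pos (by omega)]
  exact EReal.bot_lt_coe _

lemma le_hIdx (hq : q ≤ n) : q ≤ hIdx b c m n q := by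
  rcases q.eq_zero_or_pos with rfl | hq0
  · exact Nat.zero_le _
  by_contra! hlt
  have h := extSeq_hIdx_lt (b := b) (c := c) (m := m) (by omega) hq
  rw [extSeq, if_pos (by omega)] at h
  exact not_top_lt h

end HIdx

theorem genMaj_tail_eq_general (a b c : ℕ → ℤ) (m n : ℕ)
    (h : GenMaj c b a m n) :
    ∀ i, 1 ≤ i → i ≤ m + n - hIdx b c m n n →
      c (hIdx b c m n n + i) = b (hIdx b c m n n - n + i) := by
  obtain ⟨hbc, htotal, hpartial⟩ := h
  intro i hi1 hi2
  have hnH : n ≤ hIdx b c m n n := le_hIdx le_rfl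
  have hq : csum c (hIdx b c m n n) - csum b (hIdx b c m n n - n) ≤ csum a n := by
    rcases n.eq_zero_or_pos with rfl | hn
    -- `GenMaj` has no partial-sum condition when `n = 0`; interlacing supplies it.
    · simpa [csum] using csum_add_sub_csum_le_of_interlacing hbc (p := hIdx b c m 0 0) (by omega)
    · exact hpartial n hn le_rfl
  have htail := tail_eq_of_interlacing hbc (p := hIdx b c m n n - n) (by omega)
    (by rw [Nat.sub_add_cancel hnH]; linarith) hi1 (by omega)
  rwa [Nat.sub_add_cancel hnH] at htail

/-- if `c ≺ (b, a)` then `c (h_n + i) = b (h_n - n + i)` for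
`i = 1, ..., m + n - h_n`. -/
theorem genMaj_tail_eq (a b c : ℕ → ℤ) (m n : ℕ)
    (ha : IsPartOn a n) (hb : IsPartOn b m) (hc : IsPartOn c (m + n))
    (h : GenMaj c b a m n) :
    ∀ i, 1 ≤ i → i ≤ m + n - hIdx b c m n n →
      c (hIdx b c m n n + i) = b (hIdx b c m n n - n + i) :=
  genMaj_tail_eq_general a b c m n h
end

section
/- For partitions c = (c_1,...,c_{m+1}) and b = (b_1,...,b_m) and an integer a_1 ≥ 0 (the case n = 1), the generalized majorization c ≺ (b, (a_1)) holds if and only if: b_i ≥ c_{i+1} for i = 1,...,m; Σ_{i=1}^{m} b_i + a_1 = Σ_{i=1}^{m+1} c_i; and b_i = c_{i+1} for all i ≥ h_1, where h_1 := min{ i : b_i < c_i } (with conventions b_i = −∞ for i > m, c_i = −∞ for i > m+1). -/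
/-!
With one part `a₁`, the only majorization inequality is the one at `q = 1`. Subtracting it
from the equality of total sums turns it into `Σ_{i ≥ h₁} b i ≤ Σ_{i ≥ h₁} c (i + 1)`, and since
interlacing gives `c (i + 1) ≤ b i` termwise, this holds exactly when every term is an equality.
-/

open Finset

lemma csum_succ (f : ℕ → ℤ) (t : ℕ) : csum f (t + 1) = csum f t + f (t + 1) :=
  sum_Icc_succ_top (by omega) f

lemma csum_sub_csum (f : ℕ → ℤ) {s t : ℕ} (hst : s ≤ t) :
    csum f t - csum f s = ∑ i ∈ Ioc s t, f i := by
  induction t, hst using Nat.le_induction with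
  | base => simp
  | succ t hst ih => rw [sum_Ioc_succ_top hst, ← ih, csum_succ]; ring

lemma csum_succ_sub_csum_succ (f : ℕ → ℤ) {s t : ℕ} (hst : s ≤ t) :
    csum f (t + 1) - csum f (s + 1) = ∑ i ∈ Ioc s t, f (i + 1) := by
  induction t, hst using Nat.le_induction with
  | base => simp
  | succ t hst ih => rw [sum_Ioc_succ_top hst, ← ih, csum_succ f (t + 1)]; ring

lemma csum_succ_sub_csum_le_iff {b c : ℕ → ℤ} {k m : ℕ} (hkm : k ≤ m)
    (hinter : ∀ i, 1 ≤ i → i ≤ m → c (i + 1) ≤ b i) :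
    csum c (k + 1) - csum b k ≤ csum c (m + 1) - csum b m ↔
      ∀ i, k < i → i ≤ m → b i = c (i + 1) := by
  have hle : ∀ i ∈ Ioc k m, c (i + 1) ≤ b i := fun i hi => by
    rw [mem_Ioc] at hi
    exact hinter i (by omega) hi.2
  have hb := csum_sub_csum b hkm
  have hc := csum_succ_sub_csum_succ c hkm
  calc csum c (k + 1) - csum b k ≤ csum c (m + 1) - csum b m
      ↔ ∑ i ∈ Ioc k m, b i ≤ ∑ i ∈ Ioc k m, c (i + 1) := by constructor <;> intro <;> linarith
    _ ↔ ∑ i ∈ Ioc k m, c (i + 1) = ∑ i ∈ Ioc k m, b i :=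
      ⟨fun h => le_antisymm (sum_le_sum hle) h, fun h => h.ge⟩
    _ ↔ ∀ i, k < i → i ≤ m → b i = c (i + 1) := by
      rw [sum_eq_sum_iff_of_le hle]
      simp only [mem_Ioc, and_imp, eq_comm]

section hIdx

variable (b c : ℕ → ℤ) {m n q : ℕ}

lemma mem_hIdx_set_of_le (hq : 1 ≤ q) (hqn : q ≤ n) :
    m + n ∈ { i : ℕ | extSeq b m ((i : ℤ) - q + 1) < extSeq c (m + n) i } := by
  simp only [Set.mem_ofPred_eq, extSeq]
  rw [if_neg (by omega), if_neg (by omega), if_neg (by omega), if_pos le_rfl]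
  exact EReal.bot_lt_coe _

lemma hIdx_le (hq : 1 ≤ q) (hqn : q ≤ n) : hIdx b c m n q ≤ m + n :=
  Nat.sInf_le (mem_hIdx_set_of_le b c hq hqn)

-- `c 0 = +∞` under the conventions, so the index `0` never qualifies.
lemma one_le_hIdx (hq : 1 ≤ q) (hqn : q ≤ n) : 1 ≤ hIdx b c m n q := by
  refine Nat.one_le_iff_ne_zero.2 fun h0 => ?_
  rcases Nat.sInf_eq_zero.1 h0 with hmem | hempty
  · simp [extSeq, show 0 < q by omega] at hmem
  · exact Set.notMem_empty _ (hempty ▸ mem_hIdx_set_of_le b c hq hqn)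

end hIdx

theorem genMaj_one_iff_elementary_general (b c : ℕ → ℤ) (a1 : ℤ) (m : ℕ) :
    GenMaj c b (fun _ => a1) m 1 ↔
      ((∀ i, 1 ≤ i → i ≤ m → c (i + 1) ≤ b i) ∧
       csum b m + a1 = csum c (m + 1) ∧
       ∀ i, hIdx b c m 1 1 ≤ i → i ≤ m → b i = c (i + 1)) := by
  obtain ⟨k, hk⟩ := Nat.exists_eq_add_of_le' (one_le_hIdx b c (m := m) le_rfl le_rfl)
  have hkm : k ≤ m := by have := hIdx_le b c (m := m) le_rfl le_rfl; omega
  have hcsum_a : csum (fun _ => a1) 1 = a1 := by simp [csum]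
  have htail_iff := csum_succ_sub_csum_le_iff (b := b) (c := c) hkm
  simp only [GenMaj, hcsum_a]
  constructor
  · rintro ⟨hinter, hsum, hmaj⟩
    have hmaj₁ := hmaj 1 le_rfl le_rfl
    rw [hk, hcsum_a, Nat.add_sub_cancel] at hmaj₁
    have htail := (htail_iff hinter).1 (by linarith)
    exact ⟨hinter, hsum, fun i hi => htail i (by omega)⟩
  · rintro ⟨hinter, hsum, htail⟩
    refine ⟨hinter, hsum, fun q hq hq1 => ?_⟩
    obtain rfl : q = 1 := le_antisymm hq1 hq
    rw [hk, hcsum_a, Nat.add_sub_cancel]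
    have := (htail_iff hinter).2 fun i hi => htail i (by omega)
    linarith

/-- the case `n = 1` of generalized majorization (elementary
generalized majorization). -/
theorem genMaj_one_iff_elementary (b c : ℕ → ℤ) (a1 : ℤ) (m : ℕ)
    (hb : IsPartOn b m) (hc : IsPartOn c (m + 1)) (ha1 : 0 ≤ a1) :
    GenMaj c b (fun _ => a1) m 1 ↔
      ((∀ i, 1 ≤ i → i ≤ m → c (i + 1) ≤ b i) ∧
       csum b m + a1 = csum c (m + 1) ∧
       ∀ i, hIdx b c m 1 1 ≤ i → i ≤ m → b i = c (i + 1)) :=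
  genMaj_one_iff_elementary_general b c a1 m
end
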